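/- Let u be a nonconstant inner function and let φ ∈ L∞(𝕋) satisfy |φ| = 1 a.e. on 𝕋. Then m(B_φ) = √(1 − ‖A_φ‖²). -/

import Mathlib

/-!
Since `|φ| = 1`, multiplication by `φ` is an isometry of `L²`, and for `f ∈ K_u` the orthogonal
decomposition `φ f = A_φ f + B_φ f` gives `‖A_φ f‖² + ‖B_φ f‖² = ‖f‖²`. For any two operators on a
nonzero space related in this way, the minimum modulus of one is `√(1 - ‖other‖²)`: the bound
`‖B_φ f‖² ≥ (1 - ‖A_φ‖²) ‖f‖²` gives one inequality, and `‖A_φ f‖² ≤ (1 - m(B_φ)²) ‖f‖²` the other.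
The space `K_u` is nonzero because it contains the reproducing kernel `1 - \overline{u(0)} u` at
`0`, which vanishes only when `u` is constant.
-/

open MeasureTheory Complex
open scoped InnerProductSpace ENNReal

noncomputable section

namespace DTTO

instance fact2pi : Fact (0 < 2 * Real.pi) := ⟨by positivity⟩

/-- The circle, realized as `ℝ / 2πℤ`. -/
abbrev 𝕋c := AddCircle (2 * Real.pi)

/-- Normalized Haar (Lebesgue) measure on the circle. -/
abbrev μT : Measure 𝕋c := AddCircle.haarAddCircle

/-- `L²(𝕋)`. -/
abbrev L2 := Lp ℂ 2 μT

/-- `L∞(𝕋)`. -/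
abbrev Linf := Lp ℂ ⊤ μT

lemma memL2_smul (φ : Linf) (f : L2) : MemLp (⇑φ • ⇑f) 2 μT :=
  (Lp.memLp f).smul (Lp.memLp φ)

/-- Multiplication operator `M_φ : L² → L²` by a function `φ ∈ L∞`. -/
def Mmul (φ : Linf) : L2 →L[ℂ] L2 :=
  LinearMap.mkContinuous
    { toFun := fun f => (memL2_smul φ f).toLp _
      map_add' := fun f g => by
        refine Lp.ext ?_
        filter_upwards [MemLp.coeFn_toLp (memL2_smul φ (f + g)),
          MemLp.coeFn_toLp (memL2_smul φ f), MemLp.coeFn_toLp (memL2_smul φ g),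
          Lp.coeFn_add f g,
          Lp.coeFn_add ((memL2_smul φ f).toLp _) ((memL2_smul φ g).toLp _)] with
            x h1 h2 h3 h4 h5
        rw [h1, h5]
        simp only [Pi.add_apply, h2, h3]
        simp only [Pi.smul_apply', h4, Pi.add_apply, smul_add]
      map_smul' := fun c f => by
        refine Lp.ext ?_
        filter_upwards [MemLp.coeFn_toLp (memL2_smul φ (c • f)),
          MemLp.coeFn_toLp (memL2_smul φ f),
          Lp.coeFn_smul c f,
          Lp.coeFn_smul c ((memL2_smul φ f).toLp _)] with x h1 h2 h3 h4
        rw [h1, RingHom.id_apply, h4]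
        simp only [Pi.smul_apply, Pi.smul_apply', h2, h3]
        exact smul_comm _ _ _ }
    ‖φ‖ (fun f => by
      simp only [LinearMap.coe_mk, AddHom.coe_mk]
      rw [Lp.norm_toLp, Lp.norm_def, Lp.norm_def]
      rw [← ENNReal.toReal_mul]
      refine ENNReal.toReal_mono ?_ ?_
      · exact ENNReal.mul_ne_top (Lp.eLpNorm_ne_top φ) (Lp.eLpNorm_ne_top f)
      · exact eLpNorm_smul_le_eLpNorm_top_mul_eLpNorm 2 (Lp.aestronglyMeasurable f) ⇑φ)

/-- The canonical inclusion `L∞ ⊆ L²` (the measure is finite). -/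
def toL2 (φ : Linf) : L2 := ((Lp.memLp φ).mono_exponent le_top).toLp _

/-- The Hardy space `H²`, the closed linear span in `L²` of the exponentials `e_n`, `n ≥ 0`. -/
def H2 : Submodule ℂ L2 :=
  (Submodule.span ℂ (Set.range fun n : ℕ => (fourierLp 2 (n : ℤ) : L2))).topologicalClosure

instance : CompleteSpace H2 := (Submodule.isClosed_topologicalClosure _).completeSpace_coe

/-- `H²₋ = L² ⊖ H²`. -/
def Hminus : Submodule ℂ L2 := H2ᗮ

instance : CompleteSpace Hminus := (Submodule.isClosed_orthogonal _).completeSpace_coe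

/-- `H∞ = H² ∩ L∞`. -/
def MemHinf (φ : Linf) : Prop := toL2 φ ∈ H2

/-- An inner function: an element of `H² ∩ L∞` of modulus one a.e. -/
structure IsInnerFn (u : Linf) : Prop where
  memH2 : MemHinf u
  unimod : ∀ᵐ z ∂μT, ‖u z‖ = 1

/-- `u` is nonconstant (not a.e. equal to a constant). -/
def Nonconst (u : Linf) : Prop := ¬ ∃ c : ℂ, (⇑u : 𝕋c → ℂ) =ᵐ[μT] fun _ => c

/-- The subspace `uH²` of `L²`. -/
def uH2 (u : Linf) : Submodule ℂ L2 := H2.map (Mmul u).toLinearMap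

/-- The model space `K_u = H² ⊖ uH² = H² ∩ (uH²)ᗮ`. -/
def Ku (u : Linf) : Submodule ℂ L2 := H2 ⊓ (uH2 u)ᗮ

lemma isClosed_Ku (u : Linf) : IsClosed ((Ku u : Set L2)) := by
  have h : (Ku u : Set L2) = (H2 : Set L2) ∩ ((uH2 u)ᗮ : Set L2) := rfl
  rw [h]
  exact (Submodule.isClosed_topologicalClosure _).inter (Submodule.isClosed_orthogonal _)

instance (u : Linf) : CompleteSpace (Ku u) := (isClosed_Ku u).completeSpace_coe

/-- `K_u^⊥ = L² ⊖ K_u`. -/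
def KuP (u : Linf) : Submodule ℂ L2 := (Ku u)ᗮ

instance (u : Linf) : CompleteSpace (KuP u) := (Submodule.isClosed_orthogonal _).completeSpace_coe

/-- Dual truncated Toeplitz operator `D_φ` on `K_u^⊥`. -/
def Dop (u φ : Linf) : KuP u →L[ℂ] KuP u :=
  Submodule.orthogonalProjectionOnto (KuP u) ∘L Mmul φ ∘L (KuP u).subtypeL

/-- Truncated Toeplitz operator `A_φ` on `K_u`. -/
def Aop (u φ : Linf) : Ku u →L[ℂ] Ku u :=
  Submodule.orthogonalProjectionOnto (Ku u) ∘L Mmul φ ∘L (Ku u).subtypeL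

/-- The operator `B_φ : K_u → K_u^⊥`, `B_φ f = (I - P_{K_u})(φ f)`. -/
def Bop (u φ : Linf) : Ku u →L[ℂ] KuP u :=
  Submodule.orthogonalProjectionOnto (KuP u) ∘L Mmul φ ∘L (Ku u).subtypeL

/-- Toeplitz operator `T_φ : H² → H²`. -/
def Top (φ : Linf) : H2 →L[ℂ] H2 :=
  Submodule.orthogonalProjectionOnto H2 ∘L Mmul φ ∘L H2.subtypeL

/-- Hankel operator `H_φ : H² → H²₋`. -/
def Hop (φ : Linf) : H2 →L[ℂ] Hminus :=
  Submodule.orthogonalProjectionOnto Hminus ∘L Mmul φ ∘L H2.subtypeL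

/-- The exponential `e₁(ζ) = ζ` as an element of `L∞`. -/
def e1 : Linf := fourierLp ⊤ 1

/-- The exponential `e₋₁(ζ) = ζ̄` as an element of `L∞`. -/
def eneg1 : Linf := fourierLp ⊤ (-1)

/-- The operator `Q : H²₋ → H²₋`, `Q g = P₋(e₁ g)`. -/
def Qop : Hminus →L[ℂ] Hminus :=
  Submodule.orthogonalProjectionOnto Hminus ∘L Mmul e1 ∘L Hminus.subtypeL

/-- `u(0)`, the 0-th Fourier coefficient. -/
def coef0 (u : Linf) : ℂ := fourierCoeff (⇑u) 0

/-- Minimum modulus of a bounded operator. -/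
def minMod {E F : Type*} [NormedAddCommGroup E] [NormedSpace ℂ E]
    [NormedAddCommGroup F] [NormedSpace ℂ F] (T : E →L[ℂ] F) : ℝ :=
  ⨅ x : {x : E // ‖x‖ = 1}, ‖T x.1‖

/-- Complex conjugation on `L∞`. -/
lemma memLinf_star (φ : Linf) : MemLp (fun z => (starRingEnd ℂ) (φ z)) ⊤ μT := by
  refine ⟨continuous_star.comp_aestronglyMeasurable (Lp.aestronglyMeasurable φ), ?_⟩
  rw [eLpNorm_congr_norm_ae (g := ⇑φ) (Filter.Eventually.of_forall fun z => norm_star _)]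
  exact Lp.eLpNorm_lt_top φ

/-- The complex conjugate `φ̄ ∈ L∞` of `φ ∈ L∞`. -/
def conjL (φ : Linf) : Linf := (memLinf_star φ).toLp _

lemma memLinf_mul (φ ψ : Linf) : MemLp (⇑φ • ⇑ψ) ⊤ μT :=
  (Lp.memLp ψ).smul (Lp.memLp φ)

/-- The pointwise product of two elements of `L∞`. -/
def mulL (φ ψ : Linf) : Linf := (memLinf_mul φ ψ).toLp _

end DTTO

namespace DTTO

lemma inner_fourierLp_eq_zero {m n : ℤ} (h : m ≠ n) :
    (inner ℂ (fourierLp 2 m : L2) (fourierLp 2 n : L2) : ℂ) = 0 := by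
  have hcoe := congrFun (coe_fourierBasis (T := 2 * Real.pi))
  have h2 := (fourierBasis (T := 2 * Real.pi)).orthonormal.2 (i := m) (j := n) h
  simpa only [hcoe] using h2

lemma span_le_orth_em1 :
    Submodule.span ℂ (Set.range fun n : ℕ => (fourierLp 2 (n : ℤ) : L2))
      ≤ (ℂ ∙ (fourierLp 2 (-1) : L2))ᗮ := by
  rw [Submodule.span_le]
  rintro x ⟨n, rfl⟩
  rw [SetLike.mem_coe, Submodule.mem_orthogonal]
  intro w hw
  obtain ⟨c, rfl⟩ := Submodule.mem_span_singleton.1 hw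
  rw [inner_smul_left, inner_fourierLp_eq_zero (by omega : (-1 : ℤ) ≠ (n : ℤ)), mul_zero]

lemma H2_le_orth_em1 : H2 ≤ (ℂ ∙ (fourierLp 2 (-1) : L2))ᗮ :=
  Submodule.topologicalClosure_minimal _ span_le_orth_em1 (Submodule.isClosed_orthogonal _)

/-- `e₋₁ ∈ H²₋`. -/
lemma em1_mem : (fourierLp 2 (-1) : L2) ∈ Hminus := by
  unfold Hminus
  rw [Submodule.mem_orthogonal]
  intro v hv
  have h := H2_le_orth_em1 hv
  rw [Submodule.mem_orthogonal] at h
  exact inner_eq_zero_symm.mp (h _ (Submodule.mem_span_singleton_self _))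

/-- `e₋₁` as an element of `H²₋`. -/
def em1 : Hminus := ⟨(fourierLp 2 (-1) : L2), em1_mem⟩

/-- For `f ∈ K_u`, the function `u f ∈ uH² ⊆ K_u^⊥`. -/
lemma mul_mem_KuP (u : Linf) (f : Ku u) : Mmul u (f : L2) ∈ KuP u := by
  unfold KuP
  rw [Submodule.mem_orthogonal]
  intro v hv
  have hv2 : v ∈ (uH2 u)ᗮ := (Submodule.mem_inf.1 hv).2
  have hm : Mmul u (f : L2) ∈ uH2 u :=
    Submodule.mem_map_of_mem (Submodule.mem_inf.1 f.2).1
  rw [Submodule.mem_orthogonal] at hv2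
  exact inner_eq_zero_symm.mp (hv2 _ hm)

lemma Ku_le_H2 (u : Linf) : Ku u ≤ H2 := inf_le_left

/-- The inclusion `K_u ⊆ H²` as a continuous linear map. -/
def KuIncl (u : Linf) : Ku u →L[ℂ] H2 :=
  LinearMap.mkContinuous (Submodule.inclusion (Ku_le_H2 u)) 1
    (fun f => by rw [one_mul]; exact le_of_eq rfl)

end DTTO

namespace DTTO

section MinModulus

variable {E F G : Type*} [NormedAddCommGroup E] [NormedSpace ℂ E]
  [NormedAddCommGroup F] [NormedSpace ℂ F] [NormedAddCommGroup G] [NormedSpace ℂ G]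

theorem minMod_nonneg (T : E →L[ℂ] F) : 0 ≤ minMod T :=
  Real.iInf_nonneg fun _ => norm_nonneg _

theorem minMod_mul_norm_le (T : E →L[ℂ] F) (x : E) : minMod T * ‖x‖ ≤ ‖T x‖ := by
  rcases eq_or_ne x 0 with rfl | hx
  · simp
  have hx' : 0 < ‖x‖ := norm_pos_iff.2 hx
  have hunit : ‖(‖x‖⁻¹ : ℂ) • x‖ = 1 := by
    rw [norm_smul, norm_inv, Complex.norm_real, Real.norm_of_nonneg hx'.le,
      inv_mul_cancel₀ hx'.ne']
  have hbdd : BddBelow (Set.range fun y : {y : E // ‖y‖ = 1} => ‖T y.1‖) :=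
    ⟨0, by rintro _ ⟨y, rfl⟩; exact norm_nonneg _⟩
  have h := ciInf_le hbdd ⟨_, hunit⟩
  rw [map_smul, norm_smul, norm_inv, Complex.norm_real, Real.norm_of_nonneg hx'.le] at h
  rwa [← le_div_iff₀ hx', div_eq_inv_mul]

theorem le_minMod [Nontrivial E] {T : E →L[ℂ] F} {c : ℝ} (h : ∀ x : E, ‖x‖ = 1 → c ≤ ‖T x‖) :
    c ≤ minMod T := by
  obtain ⟨x, hx⟩ := exists_norm_eq E zero_le_one
  have : Nonempty {x : E // ‖x‖ = 1} := ⟨⟨x, hx⟩⟩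
  exact le_ciInf fun x => h x.1 x.2

theorem minMod_eq_sqrt_one_sub_opNorm_sq [Nontrivial E] (S : E →L[ℂ] F) (T : E →L[ℂ] G)
    (h : ∀ x, ‖S x‖ ^ 2 + ‖T x‖ ^ 2 = ‖x‖ ^ 2) : minMod T = √(1 - ‖S‖ ^ 2) := by
  set m := minMod T
  have hm0 : 0 ≤ m := minMod_nonneg T
  have hm1 : m ^ 2 ≤ 1 := by
    obtain ⟨x, hx⟩ := exists_norm_eq E zero_le_one
    have hTx := minMod_mul_norm_le T x
    rw [hx, mul_one] at hTx
    nlinarith [h x, norm_nonneg (S x)]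
  have hS : ‖S‖ ^ 2 ≤ 1 - m ^ 2 := by
    rw [← Real.le_sqrt (norm_nonneg S) (by linarith)]
    refine S.opNorm_le_bound (Real.sqrt_nonneg _) fun x => ?_
    rw [← Real.sqrt_sq (norm_nonneg x), ← Real.sqrt_mul (by linarith),
      ← Real.sqrt_sq (norm_nonneg (S x))]
    refine Real.sqrt_le_sqrt ?_
    have hTx := minMod_mul_norm_le T x
    nlinarith [h x, mul_nonneg hm0 (norm_nonneg x)]
  refine le_antisymm ?_ (le_minMod fun x hx => ?_)
  · rw [Real.le_sqrt hm0 (by linarith [sq_nonneg m])]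
    linarith
  · rw [Real.sqrt_le_left (norm_nonneg _)]
    have hSx := S.le_opNorm x
    rw [hx, mul_one] at hSx
    nlinarith [h x, norm_nonneg (S x)]

end MinModulus

lemma coeFn_Mmul (φ : Linf) (f : L2) : ⇑(Mmul φ f) =ᵐ[μT] ⇑φ • ⇑f :=
  MemLp.coeFn_toLp (memL2_smul φ f)

lemma coeFn_toL2 (φ : Linf) : ⇑(toL2 φ) =ᵐ[μT] ⇑φ :=
  MemLp.coeFn_toLp _

lemma norm_Mmul_of_unimod {φ : Linf} (hφ : ∀ᵐ z ∂μT, ‖φ z‖ = 1) (f : L2) :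
    ‖Mmul φ f‖ = ‖f‖ := by
  rw [Lp.norm_def, Lp.norm_def, eLpNorm_congr_ae (coeFn_Mmul φ f)]
  refine congrArg _ (eLpNorm_congr_norm_ae ?_)
  filter_upwards [hφ] with z hz
  simp [hz]

lemma inner_Mmul_Mmul_of_unimod {φ : Linf} (hφ : ∀ᵐ z ∂μT, ‖φ z‖ = 1) (f g : L2) :
    ⟪Mmul φ f, Mmul φ g⟫_ℂ = ⟪f, g⟫_ℂ :=
  (LinearMap.norm_map_iff_inner_map_map (Mmul φ)).1 (norm_Mmul_of_unimod hφ) f g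

lemma Mmul_fourierLp_zero (φ : Linf) : Mmul φ (fourierLp 2 0) = toL2 φ := by
  refine Lp.ext ?_
  filter_upwards [coeFn_Mmul φ (fourierLp 2 0), coeFn_fourierLp 2 (0 : ℤ), coeFn_toL2 φ]
    with z hMz hez hφz
  rw [hMz, hφz, Pi.smul_apply', hez, fourier_zero, smul_eq_mul, mul_one]

lemma inner_fourierLp_eq_fourierCoeff (f : L2) (n : ℤ) :
    ⟪fourierLp 2 n, f⟫_ℂ = fourierCoeff f n := by
  rw [← coe_fourierBasis, ← fourierBasis.repr_apply_apply, fourierBasis_repr]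

lemma inner_fourierLp_toL2 (φ : Linf) (n : ℤ) :
    ⟪fourierLp 2 n, toL2 φ⟫_ℂ = fourierCoeff φ n := by
  rw [inner_fourierLp_eq_fourierCoeff, fourierCoeff_congr_ae (coeFn_toL2 φ)]

lemma inner_fourierLp_Mmul_fourierLp (φ : Linf) (m n : ℤ) :
    ⟪fourierLp 2 m, Mmul φ (fourierLp 2 n)⟫_ℂ = fourierCoeff φ (m - n) := by
  rw [inner_fourierLp_eq_fourierCoeff, fourierCoeff_congr_ae (coeFn_Mmul φ _)]
  refine integral_congr_ae ?_
  filter_upwards [coeFn_fourierLp 2 n] with z hz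
  rw [Pi.smul_apply', hz, neg_sub, sub_eq_add_neg, add_comm, fourier_add]
  simp only [smul_eq_mul]
  ring

lemma H2_le_of_forall_fourierLp_mem {K : Submodule ℂ L2} (hK : IsClosed (K : Set L2))
    (h : ∀ n : ℕ, (fourierLp 2 (n : ℤ) : L2) ∈ K) : H2 ≤ K :=
  Submodule.topologicalClosure_minimal _ (Submodule.span_le.2 (Set.range_subset_iff.2 h)) hK

lemma fourierLp_mem_H2 (n : ℕ) : (fourierLp 2 (n : ℤ) : L2) ∈ H2 :=
  Submodule.le_topologicalClosure _ (Submodule.subset_span ⟨n, rfl⟩)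

lemma fourierCoeff_eq_zero_of_memHinf {φ : Linf} (hφ : MemHinf φ) {n : ℤ} (hn : n < 0) :
    fourierCoeff φ n = 0 := by
  have hle : H2 ≤ (ℂ ∙ (fourierLp 2 n : L2))ᗮ :=
    H2_le_of_forall_fourierLp_mem (Submodule.isClosed_orthogonal _) fun k =>
      Submodule.mem_orthogonal_singleton_iff_inner_right.2 (inner_fourierLp_eq_zero (by omega))
  rw [← inner_fourierLp_toL2]
  exact Submodule.mem_orthogonal_singleton_iff_inner_right.1 (hle hφ)

def kernelAtZero (u : Linf) : L2 := fourierLp 2 0 - starRingEnd ℂ (coef0 u) • toL2 u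

lemma kernelAtZero_mem_H2 {u : Linf} (hu : MemHinf u) : kernelAtZero u ∈ H2 :=
  H2.sub_mem (fourierLp_mem_H2 0) (H2.smul_mem _ hu)

lemma inner_kernelAtZero_Mmul_fourierLp {u : Linf} (hu : IsInnerFn u) (n : ℕ) :
    ⟪kernelAtZero u, Mmul u (fourierLp 2 n)⟫_ℂ = 0 := by
  rw [kernelAtZero, ← Mmul_fourierLp_zero, inner_sub_left, inner_smul_left, Complex.conj_conj,
    inner_Mmul_Mmul_of_unimod hu.unimod, inner_fourierLp_Mmul_fourierLp,
    orthonormal_iff_ite.1 orthonormal_fourier, coef0]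
  -- the goal is now `û(-n) - û(0) δ_{0n} = 0`
  rcases n with _ | n
  · simp
  · rw [fourierCoeff_eq_zero_of_memHinf hu.memH2 (by omega), if_neg (by omega)]
    simp

lemma kernelAtZero_mem_orthogonal_uH2 {u : Linf} (hu : IsInnerFn u) :
    kernelAtZero u ∈ (uH2 u)ᗮ := by
  have hle : H2 ≤ (ℂ ∙ kernelAtZero u)ᗮ.comap (Mmul u).toLinearMap :=
    H2_le_of_forall_fourierLp_mem ((Submodule.isClosed_orthogonal _).preimage (Mmul u).continuous)
      fun n => Submodule.mem_orthogonal_singleton_iff_inner_right.2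
        (inner_kernelAtZero_Mmul_fourierLp hu n)
  rw [Submodule.mem_orthogonal']
  intro w hw
  exact Submodule.mem_orthogonal_singleton_iff_inner_right.1
    (Submodule.map_le_iff_le_comap.2 hle hw)

lemma kernelAtZero_ne_zero {u : Linf} (hnc : Nonconst u) : kernelAtZero u ≠ 0 := by
  intro h0
  rw [kernelAtZero, sub_eq_zero] at h0
  generalize starRingEnd ℂ (coef0 u) = c at h0
  have hc : c ≠ 0 := by
    rintro hc
    rw [hc, zero_smul] at h0
    exact orthonormal_fourier.ne_zero 0 h0
  have hu : toL2 u = c⁻¹ • fourierLp 2 0 := by rw [h0, smul_smul, inv_mul_cancel₀ hc, one_smul]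
  refine hnc ⟨c⁻¹, ?_⟩
  filter_upwards [coeFn_toL2 u, Lp.coeFn_smul c⁻¹ (fourierLp 2 (0 : ℤ) : L2),
    coeFn_fourierLp 2 (0 : ℤ)] with z huz hsz hez
  rw [← huz, hu, hsz, Pi.smul_apply, hez, fourier_zero, smul_eq_mul, mul_one]

lemma nontrivial_Ku {u : Linf} (hu : IsInnerFn u) (hnc : Nonconst u) : Nontrivial (Ku u) :=
  nontrivial_of_ne
    ⟨kernelAtZero u, kernelAtZero_mem_H2 hu.memH2, kernelAtZero_mem_orthogonal_uH2 hu⟩ 0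
    (Subtype.coe_ne_coe.1 (kernelAtZero_ne_zero hnc))

lemma norm_sq_Aop_add_norm_sq_Bop {u φ : Linf} (hφ : ∀ᵐ z ∂μT, ‖φ z‖ = 1) (f : Ku u) :
    ‖Aop u φ f‖ ^ 2 + ‖Bop u φ f‖ ^ 2 = ‖f‖ ^ 2 := by
  have h := Submodule.norm_sq_eq_add_norm_sq_projection (Mmul φ (f : L2)) (Ku u)
  rw [norm_Mmul_of_unimod hφ] at h
  exact h.symm

/-- For unimodular `φ`, `m(B_φ) = √(1 - ‖A_φ‖²)`. -/
theorem minMod_Bphi_eq_sqrt_one_sub_norm_A (u φ : Linf) (hu : IsInnerFn u)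
    (hnc : Nonconst u) (hmod : ∀ᵐ z ∂μT, ‖φ z‖ = 1) :
    minMod (Bop u φ) = Real.sqrt (1 - ‖Aop u φ‖ ^ 2) := by
  have := nontrivial_Ku hu hnc
  exact minMod_eq_sqrt_one_sub_opNorm_sq _ _ (norm_sq_Aop_add_norm_sq_Bop hmod)

end DTTO
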